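/- Suppose α = 4, ξ > 0 and ζ λ ≥ 0, and assume ρ ≥ 0. Then the approximated outage probability for the locally licensed (micro-operator) scenario satisfies ∫_0^∞ W(z) f(z) dz = 1 + (β/(√(2π) ξ)) ( e^{−ζλ√ϑ − ξϑ} − e^{−ζλ√ρ − ξρ} ) − (β ζ λ /(2 √2 ξ^{3/2})) e^{(ζλ)²/(4ξ)} [ erf(ζλ/(2√ξ) + √(ξ ρ)) − erf(ζλ/(2√ξ) + √(ξ ϑ)) ], where erf(x) = (2/√π) ∫_0^x e^{−u²} du. (Proposition 3, the closed-form outage probability for the micro-operator scenario with path-loss exponent 4 and non-negligible noise.) -/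

import Mathlib

open MeasureTheory Set Real

/-
The density `f` is `-G'` for the survival function `G z = exp (-(ζλ √z) - ξ z)`, and `W` is the
ramp that equals `1` up to `ρ` and decreases linearly to `0` at `ϑ`, with slope `-β / √(2π)`.
Integrating by parts, `∫ W f = G 0 - (∫_ρ^ϑ G) / (ϑ - ρ)`. Completing the square,
`ζλ √z + ξ z = (ζλ / (2√ξ) + √(ξ z))² - (ζλ)² / (4ξ)`, so the substitution `u = ζλ / (2√ξ) + √(ξ z)`
turns `∫_ρ^ϑ G` into an elementary term plus a difference of error functions.
-/

noncomputable def ramp (ρ ϑ z : ℝ) : ℝ := max 0 (min 1 ((ϑ - z) / (ϑ - ρ)))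

section Ramp

variable {G g : ℝ → ℝ} {ρ ϑ z : ℝ}

theorem continuous_ramp : Continuous (ramp ρ ϑ) := by
  unfold ramp; fun_prop

theorem ramp_of_le (hρϑ : ρ < ϑ) (hz : z ≤ ρ) : ramp ρ ϑ z = 1 := by
  have : 1 ≤ (ϑ - z) / (ϑ - ρ) := (one_le_div (by linarith)).2 (by linarith)
  simp [ramp, this]

theorem ramp_of_mem_Icc (hz : z ∈ Icc ρ ϑ) : ramp ρ ϑ z = (ϑ - z) / (ϑ - ρ) := by
  rcases eq_or_lt_of_le (hz.1.trans hz.2) with h | h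
  · simp [ramp, h]
  have h₀ : 0 ≤ (ϑ - z) / (ϑ - ρ) := div_nonneg (by linarith [hz.2]) (by linarith)
  have h₁ : (ϑ - z) / (ϑ - ρ) ≤ 1 := (div_le_one (by linarith)).2 (by linarith [hz.1])
  simp [ramp, h₀, h₁]

theorem ramp_of_ge (hρϑ : ρ < ϑ) (hz : ϑ ≤ z) : ramp ρ ϑ z = 0 := by
  have : (ϑ - z) / (ϑ - ρ) ≤ 0 := div_nonpos_of_nonpos_of_nonneg (by linarith) (by linarith)
  simp [ramp, this]

theorem setIntegral_Ioi_ramp_mul {a : ℝ} (hρϑ : ρ < ϑ) (ha : a ≤ ϑ)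
    (hg : IntervalIntegrable g volume a ϑ) :
    ∫ z in Ioi a, ramp ρ ϑ z * g z = ∫ z in a..ϑ, ramp ρ ϑ z * g z := by
  have hzero : EqOn (fun z => ramp ρ ϑ z * g z) 0 (Ioi ϑ) := fun z hz => by
    simp [ramp_of_ge hρϑ (le_of_lt hz)]
  have hint : IntegrableOn (fun z => ramp ρ ϑ z * g z) (Ioc a ϑ) :=
    (intervalIntegrable_iff_integrableOn_Ioc_of_le ha).1
      (hg.continuousOn_mul continuous_ramp.continuousOn)
  rw [← Ioc_union_Ioi_eq_Ioi ha, setIntegral_union (Ioc_disjoint_Ioi le_rfl) measurableSet_Ioi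
    hint (integrableOn_zero.congr_fun hzero.symm measurableSet_Ioi),
    setIntegral_congr_fun measurableSet_Ioi hzero, integral_zero', add_zero,
    intervalIntegral.integral_of_le ha]

theorem integral_ramp_mul_of_hasDerivAt (hρϑ : ρ < ϑ) (hG : ContinuousOn G (Icc ρ ϑ))
    (hG' : ∀ z ∈ Ioo ρ ϑ, HasDerivAt G (-g z) z) (hg : IntervalIntegrable g volume ρ ϑ) :
    ∫ z in ρ..ϑ, ramp ρ ϑ z * g z = G ρ - (∫ z in ρ..ϑ, G z) / (ϑ - ρ) := by
  rw [intervalIntegral.integral_congr (g := fun z => (ϑ - z) / (ϑ - ρ) * g z) fun z hz => by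
      simp only [ramp_of_mem_Icc (uIcc_of_le hρϑ.le ▸ hz)],
    intervalIntegral.integral_mul_deriv_eq_deriv_mul_of_hasDerivAt (v := -G)
      (u' := fun _ => -1 / (ϑ - ρ)) (by fun_prop) (uIcc_of_le hρϑ.le ▸ hG.neg)
      (fun z _ => by simpa using ((hasDerivAt_id z).const_sub ϑ).div_const (ϑ - ρ))
      (fun z hz => by
        rw [min_eq_left hρϑ.le, max_eq_right hρϑ.le] at hz
        simpa using (hG' z hz).neg)
      intervalIntegrable_const hg]
  have hne : ϑ - ρ ≠ 0 := by linarith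
  simp only [Pi.neg_apply, sub_self, zero_div, zero_mul, div_self hne, mul_neg, one_mul,
    intervalIntegral.integral_neg, intervalIntegral.integral_const_mul]
  ring

theorem integral_Ioi_ramp_mul (hρ : 0 ≤ ρ) (hρϑ : ρ < ϑ) (hG : ContinuousOn G (Icc 0 ϑ))
    (hG' : ∀ z ∈ Ioo 0 ϑ, HasDerivAt G (-g z) z) (hg : ∀ z ∈ Ioo 0 ϑ, 0 ≤ g z) :
    ∫ z in Ioi 0, ramp ρ ϑ z * g z = G 0 - (∫ z in ρ..ϑ, G z) / (ϑ - ρ) := by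
  have hϑ : 0 ≤ ϑ := hρ.trans hρϑ.le
  have hnegG' : ∀ z ∈ Ioo 0 ϑ, HasDerivAt (-G) (g z) z := fun z hz => by
    simpa using (hG' z hz).neg
  have hg_int : IntervalIntegrable g volume 0 ϑ :=
    intervalIntegral.intervalIntegrable_deriv_of_nonneg (g := -G)
      (by simpa [uIcc_of_le hϑ] using hG.neg) (by simpa [hϑ] using hnegG') (by simpa [hϑ] using hg)
  have h0ρ : uIcc 0 ρ ⊆ uIcc 0 ϑ := by
    rw [uIcc_of_le hρ, uIcc_of_le hϑ]; exact Icc_subset_Icc_right hρϑ.le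
  have hρϑ' : uIcc ρ ϑ ⊆ uIcc 0 ϑ := by
    rw [uIcc_of_le hρϑ.le, uIcc_of_le hϑ]; exact Icc_subset_Icc_left hρ
  have hrg_int := hg_int.continuousOn_mul (continuous_ramp (ρ := ρ) (ϑ := ϑ)).continuousOn
  have hleft : ∫ z in (0)..ρ, ramp ρ ϑ z * g z = G 0 - G ρ := by
    rw [intervalIntegral.integral_congr (g := g) fun z hz => by
        simp [ramp_of_le hρϑ (uIcc_of_le hρ ▸ hz).2],
      intervalIntegral.integral_eq_sub_of_hasDerivAt_of_le hρ
        ((hG.mono (Icc_subset_Icc_right hρϑ.le)).neg)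
        (fun z hz => hnegG' z ⟨hz.1, hz.2.trans hρϑ⟩) (hg_int.mono_set h0ρ)]
    simp only [Pi.neg_apply]
    ring
  rw [setIntegral_Ioi_ramp_mul hρϑ hϑ hg_int,
    ← intervalIntegral.integral_add_adjacent_intervals (hrg_int.mono_set h0ρ)
      (hrg_int.mono_set hρϑ'), hleft,
    integral_ramp_mul_of_hasDerivAt hρϑ (hG.mono (Icc_subset_Icc_left hρ))
      (fun z hz => hG' z ⟨hρ.trans_lt hz.1, hz.2⟩) (hg_int.mono_set hρϑ')]
  ring

end Ramp

theorem hasDerivAt_exp_neg_mul_sqrt_sub_mul (a ξ : ℝ) {z : ℝ} (hz : 0 < z) :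
    HasDerivAt (fun z => exp (-(a * √z) - ξ * z))
      (-((a / (2 * √z) + ξ) * exp (-(a * √z) - ξ * z))) z := by
  have h : HasDerivAt (fun z => -(a * √z) - ξ * z) (-(a / (2 * √z)) - ξ) z := by
    refine (((hasDerivAt_sqrt hz.ne').const_mul a).neg.sub
      ((hasDerivAt_id z).const_mul ξ)).congr_deriv ?_
    ring
  convert h.exp using 1
  ring

theorem intervalIntegrable_exp_neg_sq (a b : ℝ) :
    IntervalIntegrable (fun u => exp (-u ^ 2)) volume a b :=
  (continuous_exp.comp (continuous_pow 2).neg).intervalIntegrable a b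

theorem hasDerivAt_integral_exp_neg_sq (x : ℝ) :
    HasDerivAt (fun x => ∫ u in (0)..x, exp (-u ^ 2)) (exp (-x ^ 2)) x :=
  (continuous_exp.comp (continuous_pow 2).neg).integral_hasStrictDerivAt 0 x |>.hasDerivAt

theorem hasDerivAt_primitive_exp_neg_mul_sqrt_sub_mul (a : ℝ) {ξ z : ℝ} (hξ : 0 < ξ)
    (hz : 0 < z) :
    HasDerivAt (fun z => -exp (-(a * √z) - ξ * z) / ξ
        - a / (ξ * √ξ) * exp ((a / (2 * √ξ)) ^ 2) *
          ∫ u in (0)..a / (2 * √ξ) + √ξ * √z, exp (-u ^ 2))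
      (exp (-(a * √z) - ξ * z)) z := by
  have hE := (hasDerivAt_integral_exp_neg_sq (a / (2 * √ξ) + √ξ * √z)).comp z
    (((hasDerivAt_sqrt hz.ne').const_mul √ξ).const_add (a / (2 * √ξ)))
  refine (((hasDerivAt_exp_neg_mul_sqrt_sub_mul a ξ hz).neg.div_const ξ).sub
    (hE.const_mul (a / (ξ * √ξ) * exp ((a / (2 * √ξ)) ^ 2)))).congr_deriv ?_
  have hsquare : (a / (2 * √ξ)) ^ 2 + -(a / (2 * √ξ) + √ξ * √z) ^ 2 = -(a * √z) - ξ * z := by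
    field_simp
    linear_combination (4 * ξ * z - 4 * √z ^ 2 * (√ξ ^ 2 + ξ)) * sq_sqrt hξ.le
      - 4 * ξ ^ 2 * sq_sqrt hz.le
  rw [mul_assoc _ (exp _), ← mul_assoc (exp _), ← exp_add, hsquare]
  field_simp
  ring

theorem integral_exp_neg_mul_sqrt_sub_mul (a : ℝ) {ξ ρ ϑ : ℝ} (hξ : 0 < ξ) (hρ : 0 ≤ ρ)
    (hρϑ : ρ ≤ ϑ) :
    ∫ z in ρ..ϑ, exp (-(a * √z) - ξ * z) =
      (exp (-(a * √ρ) - ξ * ρ) - exp (-(a * √ϑ) - ξ * ϑ)) / ξ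
        - a / (ξ * √ξ) * exp ((a / (2 * √ξ)) ^ 2) *
          ∫ u in (a / (2 * √ξ) + √(ξ * ρ))..(a / (2 * √ξ) + √(ξ * ϑ)), exp (-u ^ 2) := by
  rw [intervalIntegral.integral_eq_sub_of_hasDerivAt_of_le hρϑ (by fun_prop)
    (fun z hz => hasDerivAt_primitive_exp_neg_mul_sqrt_sub_mul a hξ (hρ.trans_lt hz.1))
    (by apply Continuous.intervalIntegrable; fun_prop), sqrt_mul hξ.le, sqrt_mul hξ.le,
    ← intervalIntegral.integral_interval_sub_left
      (intervalIntegrable_exp_neg_sq 0 (a / (2 * √ξ) + √ξ * √ϑ))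
      (intervalIntegrable_exp_neg_sq 0 (a / (2 * √ξ) + √ξ * √ρ))]
  ring

theorem stmt_4_general
    (α ζ lam ξ : ℝ) (hα4 : α = 4)
    (hξ : 0 < ξ) (hζlam : 0 ≤ ζ * lam)
    (f : ℝ → ℝ)
    (hf : ∀ z > (0:ℝ), f z = (2 * ζ * lam / α * z ^ (2/α - 1) + ξ) *
      Real.exp (-(ζ * lam * z ^ (2/α)) - ξ * z))
    (n R θ β ϑ ρ : ℝ) (hn : 0 < n) (hR : 0 < R)
    (hβ : β = Real.sqrt (n / (2 * Real.pi)) * (2 ^ (2 * R) - 1) ^ (-(1:ℝ)/2))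
    (hϑ : ϑ = θ + Real.sqrt (Real.pi / 2) / β)
    (hρ : ρ = θ - Real.sqrt (Real.pi / 2) / β)
    (hρ0 : 0 ≤ ρ)
    (W : ℝ → ℝ)
    (hW : ∀ t, W t = if t ≤ ρ then 1
      else if t < ϑ then 1/2 - β / Real.sqrt (2 * Real.pi) * (t - θ) else 0)
    (erf : ℝ → ℝ)
    (herf : ∀ x, erf x = 2 / Real.sqrt Real.pi * ∫ u in (0:ℝ)..x, Real.exp (-u^2)) :
    ∫ z in Set.Ioi (0:ℝ), W z * f z =
      1 + β / (Real.sqrt (2 * Real.pi) * ξ) *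
          (Real.exp (-(ζ * lam * Real.sqrt ϑ) - ξ * ϑ)
            - Real.exp (-(ζ * lam * Real.sqrt ρ) - ξ * ρ))
        - β * ζ * lam / (2 * Real.sqrt 2 * ξ ^ ((3:ℝ)/2)) *
            Real.exp ((ζ * lam)^2 / (4 * ξ)) *
            (erf (ζ * lam / (2 * Real.sqrt ξ) + Real.sqrt (ξ * ρ))
              - erf (ζ * lam / (2 * Real.sqrt ξ) + Real.sqrt (ξ * ϑ))) := by
  subst hα4
  have hβ0 : 0 < β := by
    rw [hβ]
    exact mul_pos (sqrt_pos.2 (by positivity))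
      (rpow_pos_of_pos (sub_pos.2 (one_lt_rpow (by norm_num) (by positivity))) _)
  have hsqrt : √(2 * π) = 2 * √(π / 2) := by
    rw [show 2 * π = 2 ^ 2 * (π / 2) by ring, sqrt_mul (by positivity), sqrt_sq (by norm_num)]
  have hwidth : ϑ - ρ = √(2 * π) / β := by
    rw [hϑ, hρ, hsqrt]
    ring
  have hρϑ : ρ < ϑ := sub_pos.1 (hwidth ▸ by positivity)
  obtain rfl : W = ramp ρ ϑ := funext fun t => by
    rw [hW]
    split_ifs with h₁ h₂
    · exact (ramp_of_le hρϑ h₁).symm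
    · rw [ramp_of_mem_Icc ⟨(not_le.1 h₁).le, h₂.le⟩, hwidth, hϑ, hsqrt]
      field_simp
      ring
    · exact (ramp_of_ge hρϑ (not_lt.1 h₂)).symm
  have hf' : ∀ z > 0, f z = (ζ * lam / (2 * √z) + ξ) * exp (-(ζ * lam * √z) - ξ * z) :=
    fun z hz => by
      rw [hf z hz, show (2:ℝ) / 4 - 1 = -(1 / 2) by norm_num, show (2:ℝ) / 4 = 1 / 2 by norm_num,
        rpow_neg hz.le, ← sqrt_eq_rpow]
      ring
  have h32 : ξ ^ ((3:ℝ) / 2) = ξ * √ξ := by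
    rw [show (3:ℝ) / 2 = 1 + 1 / 2 by norm_num, rpow_add hξ, rpow_one, ← sqrt_eq_rpow]
  have hsq : (ζ * lam / (2 * √ξ)) ^ 2 = (ζ * lam) ^ 2 / (4 * ξ) := by
    rw [div_pow _ (2 * √ξ), mul_pow 2, sq_sqrt hξ.le]; ring
  rw [integral_Ioi_ramp_mul (G := fun z => exp (-(ζ * lam * √z) - ξ * z)) hρ0 hρϑ (by fun_prop)
      (fun z hz => hf' z hz.1 ▸ hasDerivAt_exp_neg_mul_sqrt_sub_mul (ζ * lam) ξ hz.1)
      (fun z hz => by rw [hf' z hz.1]; positivity),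
    integral_exp_neg_mul_sqrt_sub_mul (ζ * lam) hξ hρ0 hρϑ.le, herf, herf, hwidth,
    ← intervalIntegral.integral_interval_sub_left (intervalIntegrable_exp_neg_sq 0 _)
      (intervalIntegrable_exp_neg_sq 0 _), h32, hsq, sqrt_mul zero_le_two π]
  simp only [sqrt_zero, mul_zero, neg_zero, sub_zero, exp_zero]
  field_simp
  ring

/-- Proposition 3: the closed-form approximated outage probability for the
locally licensed (micro-operator) scenario with path-loss exponent `α = 4`
and non-negligible noise `ξ > 0`. -/
theorem stmt_4
    (α ζ lam ξ : ℝ) (hα : 2 < α) (hα4 : α = 4) (hζ : 0 ≤ ζ) (hlam : 0 ≤ lam)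
    (hξ : 0 < ξ) (hζlam : 0 ≤ ζ * lam)
    (f : ℝ → ℝ)
    (hf : ∀ z > (0:ℝ), f z = (2 * ζ * lam / α * z ^ (2/α - 1) + ξ) *
      Real.exp (-(ζ * lam * z ^ (2/α)) - ξ * z))
    (n R θ β ϑ ρ : ℝ) (hn : 0 < n) (hR : 0 < R)
    (hθ : θ = 2 ^ R - 1)
    (hβ : β = Real.sqrt (n / (2 * Real.pi)) * (2 ^ (2 * R) - 1) ^ (-(1:ℝ)/2))
    (hϑ : ϑ = θ + Real.sqrt (Real.pi / 2) / β)
    (hρ : ρ = θ - Real.sqrt (Real.pi / 2) / β)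
    (hρ0 : 0 ≤ ρ)
    (W : ℝ → ℝ)
    (hW : ∀ t, W t = if t ≤ ρ then 1
      else if t < ϑ then 1/2 - β / Real.sqrt (2 * Real.pi) * (t - θ) else 0)
    (erf : ℝ → ℝ)
    (herf : ∀ x, erf x = 2 / Real.sqrt Real.pi * ∫ u in (0:ℝ)..x, Real.exp (-u^2)) :
    ∫ z in Set.Ioi (0:ℝ), W z * f z =
      1 + β / (Real.sqrt (2 * Real.pi) * ξ) *
          (Real.exp (-(ζ * lam * Real.sqrt ϑ) - ξ * ϑ)
            - Real.exp (-(ζ * lam * Real.sqrt ρ) - ξ * ρ))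
        - β * ζ * lam / (2 * Real.sqrt 2 * ξ ^ ((3:ℝ)/2)) *
            Real.exp ((ζ * lam)^2 / (4 * ξ)) *
            (erf (ζ * lam / (2 * Real.sqrt ξ) + Real.sqrt (ξ * ρ))
              - erf (ζ * lam / (2 * Real.sqrt ξ) + Real.sqrt (ξ * ϑ))) :=
  stmt_4_general α ζ lam ξ hα4 hξ hζlam f hf n R θ β ϑ ρ hn hR hβ hϑ hρ hρ0 W hW erf herf
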